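/- arXiv:1905.00150 — 6 statements merged into one kernel-verified Lean document; each statement's English description precedes it below -/
import Mathlib

section
/- Let n > 2 be an integer, let q ∈ B_n with wt(q) = w ≤ 2^(n-1), and let f ∈ B_n be balanced. Then for every A ∈ GL_n: if w is even, |W_q(f)(A)| ∈ {0, 4, 8, …, 2w−4, 2w}, and if w is odd, |W_q(f)(A)| ∈ {2, 6, 10, …, 2w−4, 2w}. Equivalently, |W_q(f)(A)| ≤ 2w and |W_q(f)(A)| ≡ 2w (mod 4). -/
open Finset Matrix

/-- Hamming weight of a Boolean function on `𝔽₂ⁿ`. -/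
def wt {n : ℕ} (f : (Fin n → ZMod 2) → ZMod 2) : ℕ :=
  (Finset.univ.filter fun a => f a = 1).card

/-- Imbalance `I_f = Σ_a (-1)^{f(a)}`. -/
def imb {n : ℕ} (f : (Fin n → ZMod 2) → ZMod 2) : ℤ :=
  ∑ a : Fin n → ZMod 2, (-1 : ℤ) ^ (f a).val

/-- q-transform coefficient `W_q(f)(A) = Σ_a (-1)^{f(a)+q(aA)}` (for `A` a matrix;
invertibility is imposed at use sites via `GL`). -/
def Wq {n : ℕ} (q f : (Fin n → ZMod 2) → ZMod 2)
    (A : Matrix (Fin n) (Fin n) (ZMod 2)) : ℤ :=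
  ∑ a : Fin n → ZMod 2, (-1 : ℤ) ^ (f a + q (Matrix.vecMul a A)).val

/-- `ρ_q = ⌈ ((2^{2n} - I_q²)/(2^n - 1))^{1/2} ⌉`. -/
noncomputable def rho {n : ℕ} (q : (Fin n → ZMod 2) → ZMod 2) : ℤ :=
  ⌈Real.sqrt (((2 : ℝ) ^ (2 * n) - (imb q : ℝ) ^ 2) / ((2 : ℝ) ^ n - 1))⌉

/-- `f` is affine: `f(x) = v·x + c`. -/
def IsAffine {n : ℕ} (f : (Fin n → ZMod 2) → ZMod 2) : Prop :=
  ∃ (v : Fin n → ZMod 2) (c : ZMod 2), ∀ x, f x = (∑ i, v i * x i) + c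

/-- For balanced `f` and `wt q = w ≤ 2^{n-1}`, each `|W_q(f)(A)|` lies in
`{2w, 2w-4, …}`: i.e. `|W_q(f)(A)| ≤ 2w` and `|W_q(f)(A)| ≡ 2w (mod 4)`. -/
theorem wq_range (n : ℕ) (hn : 2 < n)
    (q f : (Fin n → ZMod 2) → ZMod 2) (w : ℕ)
    (hq : wt q = w) (hw : w ≤ 2 ^ (n - 1)) (hf : wt f = 2 ^ (n - 1)) :
    ∀ A : GL (Fin n) (ZMod 2),
      |Wq q f A.val| ≤ 2 * (w : ℤ) ∧ |Wq q f A.val| ≡ 2 * (w : ℤ) [ZMOD 4] := by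
  intro A
  set g : (Fin n → ZMod 2) → ZMod 2 := fun a => q (Matrix.vecMul a A.val) with hgdef
  have hinv : ∀ a : Fin n → ZMod 2, Matrix.vecMul (Matrix.vecMul a (↑A⁻¹)) A.val = a := by
    intro a
    rw [Matrix.vecMul_vecMul]
    have : ((A⁻¹ : GL (Fin n) (ZMod 2)) : Matrix (Fin n) (Fin n) (ZMod 2)) * A.val = 1 := by
      exact_mod_cast A.inv_mul
    rw [this, Matrix.vecMul_one]
  have hinv' : ∀ a : Fin n → ZMod 2, Matrix.vecMul (Matrix.vecMul a A.val) (↑A⁻¹) = a := by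
    intro a
    rw [Matrix.vecMul_vecMul]
    have : A.val * ((A⁻¹ : GL (Fin n) (ZMod 2)) : Matrix (Fin n) (Fin n) (ZMod 2)) = 1 := by
      exact_mod_cast A.mul_inv
    rw [this, Matrix.vecMul_one]
  -- weight of g equals w
  have hgw : (Finset.univ.filter fun a => g a = 1).card = w := by
    rw [← hq]
    unfold wt
    apply Finset.card_bij' (fun a _ => Matrix.vecMul a A.val)
      (fun b _ => Matrix.vecMul b (↑A⁻¹))
    · intro a ha
      simpa using (Finset.mem_filter.mp ha).2
    · intro b hb
      simp only [Finset.mem_filter, Finset.mem_univ, true_and, hgdef]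
      rw [hinv b]
      exact (Finset.mem_filter.mp hb).2
    · intro a _; exact hinv' a
    · intro b _; exact hinv b
  set S1 := Finset.univ.filter fun a => f a = 1 with hS1def
  set S2 := Finset.univ.filter fun a => g a = 1 with hS2def
  set s := (S1 ∩ S2).card with hsdef
  have hterm : ∀ x y : ZMod 2, (-1 : ℤ) ^ ((x + y).val) = if x = y then 1 else -1 := by
    decide
  have hW : Wq q f A.val =
      ((Finset.univ.filter fun a => f a = g a).card : ℤ)
        - ((Finset.univ.filter fun a => ¬ f a = g a).card : ℤ) := by
    unfold Wq
    rw [Finset.sum_congr rfl fun a _ => hterm (f a) (g a)]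
    rw [Finset.sum_ite, Finset.sum_const, Finset.sum_const]
    push_cast
    ring
  have hsplit : (Finset.univ.filter fun a => f a = g a).card
      + (Finset.univ.filter fun a => ¬ f a = g a).card = 2 ^ n := by
    rw [Finset.card_filter_add_card_filter_not]
    simp [ZMod.card]
  have hneqset : (Finset.univ.filter fun a => ¬ f a = g a) = (S1 \ S2) ∪ (S2 \ S1) := by
    ext a
    simp only [Finset.mem_filter, Finset.mem_univ, true_and, Finset.mem_union,
      Finset.mem_sdiff, hS1def, hS2def]
    have : ∀ x y : ZMod 2, (¬ x = y) ↔ ((x = 1 ∧ ¬ y = 1) ∨ (y = 1 ∧ ¬ x = 1)) := by decide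
    exact this (f a) (g a)
  have hdisj : Disjoint (S1 \ S2) (S2 \ S1) := disjoint_sdiff_sdiff
  have hneqcard : (Finset.univ.filter fun a => ¬ f a = g a).card
      = (S1.card - s) + (S2.card - s) := by
    rw [hneqset, Finset.card_union_of_disjoint hdisj]
    have h1 := Finset.card_inter_add_card_sdiff S1 S2
    have h2 := Finset.card_inter_add_card_sdiff S2 S1
    rw [Finset.inter_comm S2 S1] at h2
    omega
  have hS1card : S1.card = 2 ^ (n - 1) := hf
  have hS2card : S2.card = w := hgw
  have hsle1 : s ≤ 2 ^ (n - 1) := by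
    rw [← hS1card]; exact Finset.card_le_card (Finset.inter_subset_left)
  have hsle2 : s ≤ w := by
    rw [← hS2card]; exact Finset.card_le_card (Finset.inter_subset_right)
  have hpow : 2 ^ n = 2 * 2 ^ (n - 1) := by
    rw [← pow_succ']
    congr 1
    omega
  have hWval : Wq q f A.val = 4 * (s : ℤ) - 2 * (w : ℤ) := by
    rw [hW]
    have h1 : ((Finset.univ.filter fun a => ¬ f a = g a).card : ℤ)
        = (2 ^ (n-1) : ℤ) - s + ((w : ℤ) - s) := by
      rw [hneqcard, hS1card, hS2card]
      push_cast [Nat.cast_sub hsle1, Nat.cast_sub hsle2]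
      ring
    have h2 : ((Finset.univ.filter fun a => f a = g a).card : ℤ)
        = 2 * (2 ^ (n-1) : ℤ) - ((2 ^ (n-1) : ℤ) - s + ((w : ℤ) - s)) := by
      have := hsplit
      rw [hpow] at this
      omega
    rw [h1, h2]
    ring
  constructor
  · rw [abs_le]
    constructor <;> omega
  · rw [Int.ModEq]
    rcases abs_cases (Wq q f A.val) with ⟨h, _⟩ | ⟨h, _⟩ <;> omega
end

section
/- Let n > 2 be an integer and let q ∈ B_n be non-constant. If f ∈ B_n is a balanced q-nearly bent function, then there exists a matrix A_0 ∈ GL_n such that |W_q(f)(A_0)| = ρ_q (i.e., the bound ρ_q is attained at some invertible matrix). -/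
/-
Write `F = (-1)^f` and `Q = (-1)^q`. Since `Σ F = 0`, subtracting the constant `Q 0` from
`Q` changes no `W_q(f)(A)` and kills the term `a = 0`, so `W_q(f)(A)` only involves the
nonzero vectors. Over `𝔽₂`, `GL_n` acts transitively on nonzero vectors and on pairs of
distinct nonzero vectors, so summing `W_q(f)(A)²` over `GL_n` reduces to sums over these two
orbits, which gives
  `(2ⁿ - 1) Σ_A W_q(f)(A)² = |GL_n| (2²ⁿ - I_q²)`.
Hence the mean of `W_q(f)(A)²` is `(2²ⁿ - I_q²)/(2ⁿ - 1)`, so some `|W_q(f)(A)|` is at least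
its square root, hence at least `ρ_q` since it is an integer.
-/

open Finset Matrix

theorem Module.Basis.sumExtend_inl {K V ι : Type*} [DivisionRing K] [AddCommGroup V]
    [Module K V] {v : ι → V} (hv : LinearIndependent K v) (i : ι) :
    Module.Basis.sumExtend hv (.inl i) = v i := by
  simp only [sumExtend, Equiv.trans_def, coe_reindex, coe_extend, Function.comp_apply]
  rfl

theorem LinearIndependent.exists_linearEquiv_apply_eq {K V ι : Type*} [DivisionRing K]
    [AddCommGroup V] [Module K V] [FiniteDimensional K V] {v w : ι → V}
    (hv : LinearIndependent K v) (hw : LinearIndependent K w) :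
    ∃ L : V ≃ₗ[K] V, ∀ i, L (v i) = w i := by
  set bv := Module.Basis.sumExtend hv
  set bw := Module.Basis.sumExtend hw
  have := Module.Finite.finite_basis bv
  have := Module.Finite.finite_basis bw
  have : Finite ι := Finite.sum_left (Module.Basis.sumExtendIndex hv)
  have : Finite (Module.Basis.sumExtendIndex hv) := Finite.sum_right ι
  have : Finite (Module.Basis.sumExtendIndex hw) := Finite.sum_right ι
  have hcard := (Module.finrank_eq_nat_card_basis bv).symm.trans
    (Module.finrank_eq_nat_card_basis bw)
  rw [Nat.card_sum, Nat.card_sum, Nat.add_left_cancel_iff] at hcard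
  obtain ⟨e⟩ := Finite.card_eq.mp hcard
  refine ⟨bv.equiv bw (Equiv.sumCongr (Equiv.refl ι) e), fun i => ?_⟩
  rw [← Module.Basis.sumExtend_inl hv, Module.Basis.equiv_apply]
  exact Module.Basis.sumExtend_inl hw i

theorem linearIndependent_pair_zmod_two {V : Type*} [AddCommGroup V] [Module (ZMod 2) V]
    {a b : V} (ha : a ≠ 0) (hb : b ≠ 0) (hab : a ≠ b) :
    LinearIndependent (ZMod 2) ![a, b] := by
  have hneg : -b = b := by
    rw [← neg_one_smul (ZMod 2) b, show (-1 : ZMod 2) = 1 from rfl, one_smul]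
  have hcases : ∀ s : ZMod 2, s = 0 ∨ s = 1 := by decide
  rw [LinearIndependent.pair_iff]
  intro s t hst
  rcases hcases s with rfl | rfl <;> rcases hcases t with rfl | rfl
  · exact ⟨rfl, rfl⟩
  · simp_all
  · simp_all
  · rw [one_smul, one_smul, add_eq_zero_iff_eq_neg, hneg] at hst
    exact absurd hst hab

theorem MulAction.card_smul_sum_smul_eq {G X M : Type*} [Group G] [Fintype G] [MulAction G X]
    [AddCommMonoid M] {O : Finset X} (hO : ∀ (g : G), ∀ x ∈ O, g • x ∈ O)
    (htrans : ∀ x ∈ O, ∀ y ∈ O, ∃ g : G, g • x = y) (F : X → M) {x : X}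
    (hx : x ∈ O) :
    #O • ∑ g : G, F (g • x) = Fintype.card G • ∑ y ∈ O, F y := by
  have hconst : ∀ y ∈ O, ∑ g : G, F (g • y) = ∑ g : G, F (g • x) := by
    intro y hy
    obtain ⟨h, rfl⟩ := htrans x hx y hy
    simp_rw [smul_smul]
    exact Fintype.sum_equiv (Equiv.mulRight h) _ _ fun _ => rfl
  have hperm : ∀ g : G, ∑ y ∈ O, F (g • y) = ∑ y ∈ O, F y := fun g =>
    Finset.sum_nbij' (g • ·) (g⁻¹ • ·) (hO g) (hO g⁻¹) (fun _ _ => inv_smul_smul g _)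
      (fun _ _ => smul_inv_smul g _) fun _ _ => rfl
  calc #O • ∑ g : G, F (g • x) = ∑ y ∈ O, ∑ g : G, F (g • y) := by
        rw [← Finset.sum_const, Finset.sum_congr rfl hconst]
    _ = ∑ g : G, ∑ y ∈ O, F y := by rw [Finset.sum_comm]; simp_rw [hperm]
    _ = Fintype.card G • ∑ y ∈ O, F y := by rw [Finset.sum_const, Finset.card_univ]

theorem Finset.sum_sum_eq_sum_add_sum_offDiag {ι M : Type*} [DecidableEq ι] [AddCommMonoid M]
    (s : Finset ι) (h : ι → ι → M) :
    ∑ i ∈ s, ∑ j ∈ s, h i j = ∑ i ∈ s, h i i + ∑ p ∈ s.offDiag, h p.1 p.2 := by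
  rw [← sum_product', ← diag_union_offDiag, sum_union (disjoint_diag_offDiag s), sum_diag]

theorem Finset.sum_offDiag_mul {ι R : Type*} [DecidableEq ι] [CommRing R] (s : Finset ι)
    (u v : ι → R) :
    ∑ p ∈ s.offDiag, u p.1 * v p.2
      = (∑ i ∈ s, u i) * (∑ i ∈ s, v i) - ∑ i ∈ s, u i * v i := by
  rw [eq_sub_iff_add_eq, sum_mul_sum, sum_sum_eq_sum_add_sum_offDiag, add_comm]

theorem Finset.sum_sq_sum_mul {ι κ R : Type*} [DecidableEq ι] [Fintype κ] [CommRing R]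
    (s : Finset ι) (u : ι → R) (w : κ → ι → R) :
    ∑ k, (∑ i ∈ s, u i * w k i) ^ 2
      = ∑ i ∈ s, u i ^ 2 * ∑ k, w k i ^ 2
        + ∑ p ∈ s.offDiag, u p.1 * u p.2 * ∑ k, w k p.1 * w k p.2 := by
  calc _ = ∑ i ∈ s, ∑ j ∈ s, u i * u j * ∑ k, w k i * w k j := by
        simp_rw [sq, sum_mul_sum, mul_sum]
        rw [sum_comm]
        refine sum_congr rfl fun i _ => ?_
        rw [sum_comm]
        exact sum_congr rfl fun j _ => sum_congr rfl fun k _ => by ring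
    _ = _ := by rw [sum_sum_eq_sum_add_sum_offDiag]; simp only [sq]

theorem exists_ceil_sqrt_le_abs {ι : Type*} [Fintype ι] [Nonempty ι] (w : ι → ℤ) {x : ℝ}
    (hx : Fintype.card ι * x ≤ ∑ i, (w i : ℝ) ^ 2) : ∃ i, ⌈√x⌉ ≤ |w i| := by
  by_contra! hlt
  set r := ⌈√x⌉ - 1
  have hw : ∀ i, |w i| ≤ r := fun i => Int.le_sub_one_of_lt (hlt i)
  have hr : (0 : ℝ) ≤ r := by exact_mod_cast (abs_nonneg _).trans (hw (Classical.arbitrary ι))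
  have hsum : ∑ i, (w i : ℝ) ^ 2 ≤ Fintype.card ι * (r : ℝ) ^ 2 := by
    rw [← card_univ, ← nsmul_eq_mul]
    refine sum_le_card_nsmul _ _ _ fun i _ => ?_
    rw [← sq_abs, ← Int.cast_abs]
    exact pow_le_pow_left₀ (by positivity) (by exact_mod_cast hw i) 2
  have hxr : x ≤ (r : ℝ) ^ 2 :=
    le_of_mul_le_mul_left (hx.trans hsum) (by exact_mod_cast Fintype.card_pos)
  have : ⌈√x⌉ ≤ r := Int.ceil_le.mpr ((Real.sqrt_le_sqrt hxr).trans (Real.sqrt_sq hr).le)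
  omega

namespace Matrix.GeneralLinearGroup

theorem sum_transpose {m K M : Type*} [Fintype m] [DecidableEq m] [CommRing K] [Fintype (GL m K)]
    [AddCommMonoid M] (h : Matrix m m K → M) :
    ∑ A : GL m K, h (A : Matrix m m K)ᵀ = ∑ A : GL m K, h A :=
  Fintype.sum_equiv ((Units.mapEquiv (transposeRingEquiv m K).toMulEquiv).toEquiv.trans
    (Units.opEquiv.toEquiv.trans MulOpposite.opEquiv.symm)) _ _ fun _ => rfl

theorem exists_smul_eq_of_linearIndependent {K m ι : Type*} [Field K] [Fintype m] [DecidableEq m]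
    {v w : ι → m → K} (hv : LinearIndependent K v) (hw : LinearIndependent K w) :
    ∃ A : GL m K, ∀ i, A • v i = w i := by
  obtain ⟨L, hL⟩ := hv.exists_linearEquiv_apply_eq hw
  refine ⟨Units.map LinearMap.toMatrixAlgEquiv'.toMonoidHom
    ((LinearMap.GeneralLinearGroup.generalLinearEquiv K _).symm L), fun i => ?_⟩
  rw [Units.smul_def, ← hL]
  exact LinearMap.toMatrix'_mulVec (L : (m → K) →ₗ[K] (m → K)) (v i)

theorem card_smul_sum_smul_nonzero {K m M : Type*} [Field K] [Fintype K] [DecidableEq K]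
    [Fintype m] [DecidableEq m] [AddCommMonoid M] (F : (m → K) → M) {a : m → K}
    (ha : a ∈ univ.erase 0) :
    #(univ.erase (0 : m → K)) • ∑ A : GL m K, F (A • a)
      = Fintype.card (GL m K) • ∑ c ∈ univ.erase 0, F c := by
  refine MulAction.card_smul_sum_smul_eq (fun A c hc => ?_) (fun c hc d hd => ?_) F ha
  · simpa [smul_eq_zero_iff_eq] using hc
  · obtain ⟨A, hA⟩ := exists_smul_eq_of_linearIndependent
      (linearIndependent_unique_iff.mpr (ne_of_mem_erase hc) :
        LinearIndependent K fun _ : Unit => c)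
      (linearIndependent_unique_iff.mpr (ne_of_mem_erase hd) :
        LinearIndependent K fun _ : Unit => d)
    exact ⟨A, hA ()⟩

section ZModTwo

variable {n : ℕ}

theorem card_smul_sum_smul_offDiag {M : Type*} [AddCommMonoid M]
    (F : (Fin n → ZMod 2) × (Fin n → ZMod 2) → M) {p} (hp : p ∈ (univ.erase 0).offDiag) :
    #(univ.erase (0 : Fin n → ZMod 2)).offDiag • ∑ A : GL (Fin n) (ZMod 2), F (A • p)
      = Fintype.card (GL (Fin n) (ZMod 2)) • ∑ p ∈ (univ.erase 0).offDiag, F p := by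
  refine MulAction.card_smul_sum_smul_eq (fun A c hc => ?_) (fun c hc d hd => ?_) F hp
  · simp only [mem_offDiag, mem_erase, mem_univ, and_true, Prod.smul_fst, Prod.smul_snd] at hc ⊢
    simpa [smul_eq_zero_iff_eq, smul_left_cancel_iff] using hc
  · simp only [mem_offDiag, mem_erase, mem_univ, and_true] at hc hd
    obtain ⟨A, hA⟩ := exists_smul_eq_of_linearIndependent
      (linearIndependent_pair_zmod_two hc.1 hc.2.1 hc.2.2)
      (linearIndependent_pair_zmod_two hd.1 hd.2.1 hd.2.2)
    exact ⟨A, Prod.ext (hA 0) (hA 1)⟩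

theorem card_mul_sub_one_mul_sum_sq {R : Type*} [CommRing R] (u v : (Fin n → ZMod 2) → R) :
    (#(univ.erase (0 : Fin n → ZMod 2)) : R) * (#(univ.erase (0 : Fin n → ZMod 2)) - 1) *
        ∑ A : GL (Fin n) (ZMod 2), (∑ a ∈ univ.erase 0, u a * v (A • a)) ^ 2
      = Fintype.card (GL (Fin n) (ZMod 2)) *
        ((#(univ.erase (0 : Fin n → ZMod 2)) - 1) *
            (∑ a ∈ univ.erase 0, u a ^ 2) * (∑ a ∈ univ.erase 0, v a ^ 2) +
          ((∑ a ∈ univ.erase 0, u a) ^ 2 - ∑ a ∈ univ.erase 0, u a ^ 2) *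
            ((∑ a ∈ univ.erase 0, v a) ^ 2 - ∑ a ∈ univ.erase 0, v a ^ 2)) := by
  set S := univ.erase (0 : Fin n → ZMod 2)
  set c := (Fintype.card (GL (Fin n) (ZMod 2)) : R)
  have hdiag : ∀ a ∈ S,
      (#S : R) * (#S - 1) * (u a ^ 2 * ∑ A : GL (Fin n) (ZMod 2), v (A • a) ^ 2) =
        u a ^ 2 * (c * ((#S - 1) * ∑ a ∈ S, v a ^ 2)) := by
    intro a ha
    have := card_smul_sum_smul_nonzero (fun c => v c ^ 2) ha
    rw [nsmul_eq_mul, nsmul_eq_mul] at this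
    linear_combination u a ^ 2 * (#S - 1) * this
  have hoff : ∀ p ∈ S.offDiag, (#S : R) * (#S - 1) *
        (u p.1 * u p.2 * ∑ A : GL (Fin n) (ZMod 2), v (A • p.1) * v (A • p.2))
      = u p.1 * u p.2 * (c * ((∑ a ∈ S, v a) ^ 2 - ∑ a ∈ S, v a ^ 2)) := by
    intro p hp
    have := card_smul_sum_smul_offDiag (fun p => v p.1 * v p.2) hp
    rw [nsmul_eq_mul, nsmul_eq_mul, offDiag_card, sum_offDiag_mul,
      Nat.cast_sub (Nat.le_mul_self _), Nat.cast_mul] at this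
    simp only [Prod.smul_fst, Prod.smul_snd, ← sq] at this
    linear_combination u p.1 * u p.2 * this
  rw [sum_sq_sum_mul, mul_add, mul_sum, mul_sum, sum_congr rfl hdiag, sum_congr rfl hoff,
    ← sum_mul, ← sum_mul, sum_offDiag_mul]
  simp only [← sq]
  ring

end ZModTwo

end Matrix.GeneralLinearGroup

def negOnePow (x : ZMod 2) : ℤ := (-1) ^ x.val

theorem negOnePow_add : ∀ x y : ZMod 2, negOnePow (x + y) = negOnePow x * negOnePow y := by
  decide

theorem negOnePow_sq : ∀ x : ZMod 2, negOnePow x ^ 2 = 1 := by decide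

theorem negOnePow_eq_one_sub_two_mul_ite :
    ∀ x : ZMod 2, negOnePow x = 1 - 2 * if x = 1 then 1 else 0 := by decide

section BooleanFunctions

variable {n : ℕ}

theorem imb_eq_two_pow_sub_two_mul_wt (f : (Fin n → ZMod 2) → ZMod 2) :
    imb f = 2 ^ n - 2 * wt f := by
  change ∑ a, negOnePow (f a) = _
  simp_rw [negOnePow_eq_one_sub_two_mul_ite, sum_sub_distrib, ← mul_sum, sum_boole]
  simp [wt]

theorem Wq_transpose_eq_sum_nonzero (q f : (Fin n → ZMod 2) → ZMod 2) (hf : imb f = 0)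
    (A : GL (Fin n) (ZMod 2)) :
    Wq q f (A : Matrix (Fin n) (Fin n) (ZMod 2))ᵀ
      = ∑ a ∈ univ.erase 0, negOnePow (f a) * (negOnePow (q (A • a)) - negOnePow (q 0)) := by
  have hsum : ∑ a, negOnePow (f a) = 0 := hf
  rw [sum_erase _ (by simp), Wq]
  simp_rw [mul_sub, sum_sub_distrib, ← sum_mul, hsum, zero_mul, sub_zero]
  exact sum_congr rfl fun a _ => by rw [← negOnePow_add, vecMul_transpose]; rfl

theorem two_pow_sub_one_mul_sum_Wq_sq (hn : 2 ≤ n) (q f : (Fin n → ZMod 2) → ZMod 2)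
    (hf : imb f = 0) :
    ((2 : ℤ) ^ n - 1) * ∑ A : GL (Fin n) (ZMod 2), Wq q f A.val ^ 2
      = Fintype.card (GL (Fin n) (ZMod 2)) * (2 ^ (2 * n) - imb q ^ 2) := by
  set S := univ.erase (0 : Fin n → ZMod 2)
  set ε := negOnePow (q 0)
  set F := fun a => negOnePow (f a)
  set R := fun a => negOnePow (q a) - ε
  have hS : (#S : ℤ) = 2 ^ n - 1 := by
    rw [card_erase_of_mem (mem_univ _), card_univ]
    simp [Nat.cast_sub Nat.one_le_two_pow]
  have hF2 : ∑ a ∈ S, F a ^ 2 = #S := by simp [F, negOnePow_sq]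
  have hF : (∑ a ∈ S, F a) ^ 2 = 1 := by
    have hsum : F 0 + ∑ a ∈ S, F a = 0 := (add_sum_erase _ _ (mem_univ _)).trans hf
    rw [eq_neg_of_add_eq_zero_right hsum, neg_sq, negOnePow_sq]
  have hQ : ∑ a ∈ S, negOnePow (q a) = imb q - ε :=
    eq_sub_of_add_eq' (add_sum_erase _ (fun a => negOnePow (q a)) (mem_univ _))
  have hR : ∑ a ∈ S, R a = imb q - ε - #S * ε := by
    simp [R, sum_sub_distrib, hQ]
  have hR2 : ∑ a ∈ S, R a ^ 2 = 2 * #S + 2 - 2 * ε * imb q := by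
    have : ∀ a, R a ^ 2 = 2 - 2 * ε * negOnePow (q a) := fun a => by
      linear_combination negOnePow_sq (q a) + negOnePow_sq (q 0)
    simp only [this, sum_sub_distrib, ← mul_sum, hQ, sum_const, nsmul_eq_mul]
    linear_combination 2 * negOnePow_sq (q 0)
  have key := Matrix.GeneralLinearGroup.card_mul_sub_one_mul_sum_sq F R
  rw [hF2, hF, hR, hR2] at key
  -- `Wq` uses the right action `a ↦ aA`; transposing turns it into `A • a = A *ᵥ a`.
  rw [← Matrix.GeneralLinearGroup.sum_transpose (fun M => Wq q f M ^ 2)]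
  simp_rw [Wq_transpose_eq_sum_nonzero q f hf]
  have h2n : (2 : ℤ) ^ n = #S + 1 := by linarith
  have hS1 : (#S : ℤ) - 1 ≠ 0 := by
    have : (2 : ℤ) ^ 2 ≤ 2 ^ n := pow_le_pow_right₀ (by norm_num) hn
    linarith
  rw [pow_mul', h2n, add_sub_cancel_right]
  apply mul_left_cancel₀ hS1
  linear_combination key - Fintype.card (GL (Fin n) (ZMod 2)) * (#S - 1) * (#S + 1) ^ 2 *
    negOnePow_sq (q 0)

end BooleanFunctions

theorem rho_attained_general (n : ℕ) (hn : 2 < n)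
    (q : (Fin n → ZMod 2) → ZMod 2)
    (f : (Fin n → ZMod 2) → ZMod 2) (hbal : wt f = 2 ^ (n - 1))
    (hnb : ∀ A : GL (Fin n) (ZMod 2), |Wq q f A.val| ≤ rho q) :
    ∃ A₀ : GL (Fin n) (ZMod 2), |Wq q f A₀.val| = rho q := by
  have hf : imb f = 0 := by
    rw [imb_eq_two_pow_sub_two_mul_wt, hbal]
    push_cast
    rw [← pow_succ', Nat.sub_add_cancel (by omega), sub_self]
  have h2n : (0 : ℝ) < 2 ^ n - 1 := by
    linarith [one_lt_pow₀ (by norm_num : (1 : ℝ) < 2) (by omega : n ≠ 0)]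
  have hsum : ((2 : ℝ) ^ n - 1) * ∑ A : GL (Fin n) (ZMod 2), (Wq q f A.val : ℝ) ^ 2
      = Fintype.card (GL (Fin n) (ZMod 2)) * (2 ^ (2 * n) - (imb q : ℝ) ^ 2) := by
    exact_mod_cast two_pow_sub_one_mul_sum_Wq_sq (by omega) q f hf
  obtain ⟨A₀, hA₀⟩ := exists_ceil_sqrt_le_abs (fun A : GL (Fin n) (ZMod 2) => Wq q f A.val)
    (x := ((2 : ℝ) ^ (2 * n) - (imb q : ℝ) ^ 2) / ((2 : ℝ) ^ n - 1)) (by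
      rw [mul_div_assoc', div_le_iff₀ h2n]
      linarith)
  exact ⟨A₀, le_antisymm (hnb A₀) hA₀⟩

/-- If a balanced `f` is `q`-nearly bent, the bound `ρ_q` is attained at some
invertible matrix. -/
theorem rho_attained (n : ℕ) (hn : 2 < n)
    (q : (Fin n → ZMod 2) → ZMod 2) (hqnc : ∃ x y, q x ≠ q y)
    (f : (Fin n → ZMod 2) → ZMod 2) (hbal : wt f = 2 ^ (n - 1))
    (hnb : ∀ A : GL (Fin n) (ZMod 2), |Wq q f A.val| ≤ rho q) :
    ∃ A₀ : GL (Fin n) (ZMod 2), |Wq q f A₀.val| = rho q :=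
  rho_attained_general n hn q f hbal hnb
end

section
/- Let n > 2 be an integer and let q ∈ B_n with wt(q) ≤ 2^(n-1). If there exists a balanced q-nearly bent function in B_n, then ρ_q ≡ 0 (mod 4) when wt(q) is even, and ρ_q ≡ 2 (mod 4) when wt(q) is odd. -/
open Finset Matrix

/-!
Write `N = 2^n` and `χ_g(a) = (-1)^{g(a)}`, so that `W_q(f)(A) = Σ_a χ_f(a) χ_q(aA)`. The group
`GL_n(𝔽₂)` acts transitively on nonzero vectors and on pairs of distinct nonzero vectors, so
averaging over `A` turns the first and second moments of `Σ_{a ≠ 0} χ_f(a) χ_q(aA)` into sums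
over these two orbits. For balanced `f` this yields
`(N - 1) Σ_A W_q(f)(A)² = |GL_n| (N² - I_q²)`, so some `A` has `|W_q(f)(A)| ≥ ρ_q`, and
nearly-bentness forces `ρ_q = |W_q(f)(A)|`. Finally `W_q(f)(A) ≡ 2 wt(q) (mod 4)`: termwise
`(1 - χ_f(a)) (1 - χ_q(aA)) ≡ 0 (mod 4)`, and `I_f = 0`.
-/

open scoped RightActions

theorem Finset.card_nsmul_sum_op_smul_eq {G X M : Type*} [Group G] [Fintype G]
    [MulAction Gᵐᵒᵖ X] [AddCommMonoid M] {S : Finset X} (hS : ∀ x ∈ S, ∀ g : G, x <• g ∈ S)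
    (htrans : ∀ x ∈ S, ∀ y ∈ S, ∃ g : G, x <• g = y) (f : X → M) {x : X} (hx : x ∈ S) :
    #S • ∑ g : G, f (x <• g) = Fintype.card G • ∑ y ∈ S, f y := by
  have orbit_sum : ∀ y ∈ S, ∑ g : G, f (y <• g) = ∑ g : G, f (x <• g) := by
    intro y hy
    obtain ⟨h, rfl⟩ := htrans x hx y hy
    simp_rw [op_smul_op_smul]
    exact Equiv.sum_comp (Equiv.mulLeft h) fun g => f (x <• g)
  have perm_sum : ∀ g : G, ∑ y ∈ S, f (y <• g) = ∑ y ∈ S, f y := fun g =>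
    sum_nbij' (· <• g) (· <• g⁻¹) (fun y hy => hS y hy g) (fun y hy => hS y hy g⁻¹)
      (fun y _ => by simp) (fun y _ => by simp) fun _ _ => rfl
  calc #S • ∑ g : G, f (x <• g) = ∑ y ∈ S, ∑ g : G, f (y <• g) := by
        rw [← sum_const, sum_congr rfl orbit_sum]
    _ = Fintype.card G • ∑ y ∈ S, f y := by
        rw [sum_comm, sum_congr rfl fun g _ => perm_sum g, sum_const, card_univ]

theorem Finset.card_mul_sum_sum_mul_op_smul {G X R : Type*} [Group G] [Fintype G]
    [MulAction Gᵐᵒᵖ X] [CommSemiring R] {S : Finset X} (hS : ∀ x ∈ S, ∀ g : G, x <• g ∈ S)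
    (htrans : ∀ x ∈ S, ∀ y ∈ S, ∃ g : G, x <• g = y) (w f : X → R) :
    #S * ∑ g : G, ∑ x ∈ S, w x * f (x <• g) = Fintype.card G * (∑ x ∈ S, w x) * ∑ y ∈ S, f y := by
  calc #S * ∑ g : G, ∑ x ∈ S, w x * f (x <• g) = ∑ x ∈ S, w x * (#S • ∑ g : G, f (x <• g)) := by
        simp only [sum_comm (s := S), mul_sum, nsmul_eq_mul, mul_left_comm]
    _ = ∑ x ∈ S, w x * (Fintype.card G • ∑ y ∈ S, f y) :=
        sum_congr rfl fun x hx => by rw [card_nsmul_sum_op_smul_eq hS htrans f hx]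
    _ = Fintype.card G * (∑ x ∈ S, w x) * ∑ y ∈ S, f y := by
        rw [← sum_mul, nsmul_eq_mul]; ring

theorem Finset.sq_sum_eq_sum_sq_add_sum_offDiag {α R : Type*} [DecidableEq α] [CommSemiring R]
    (s : Finset α) (x : α → R) :
    (∑ a ∈ s, x a) ^ 2 = ∑ a ∈ s, x a ^ 2 + ∑ p ∈ s.offDiag, x p.1 * x p.2 := by
  rw [sq, sum_mul_sum, ← sum_product', ← diag_union_offDiag, sum_union (disjoint_diag_offDiag s),
    diag, sum_map]
  simp [sq]

theorem Finset.sum_offDiag_mul_of_sq_eq_one {α R : Type*} [DecidableEq α] [CommRing R]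
    {s : Finset α} {x : α → R} (hx : ∀ a ∈ s, x a ^ 2 = 1) :
    ∑ p ∈ s.offDiag, x p.1 * x p.2 = (∑ a ∈ s, x a) ^ 2 - #s := by
  rw [sq_sum_eq_sum_sq_add_sum_offDiag, sum_congr rfl hx]
  simp

theorem linearIndependent_pair_zmod_two_iff {V : Type*} [AddCommGroup V] [Module (ZMod 2) V]
    {a b : V} : LinearIndependent (ZMod 2) ![a, b] ↔ a ≠ 0 ∧ b ≠ 0 ∧ a ≠ b := by
  by_cases ha : a = 0
  · simpa [ha] using fun h : LinearIndependent (ZMod 2) ![0, b] => h.ne_zero 0 rfl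
  rw [LinearIndependent.pair_iff' ha]
  refine ⟨fun h => ⟨ha, by simpa [eq_comm] using h 0, by simpa using h 1⟩,
    fun ⟨_, hb, hab⟩ c => ?_⟩
  obtain rfl | rfl : c = 0 ∨ c = 1 := by revert c; decide
  · simpa [eq_comm] using hb
  · simpa using hab

namespace Matrix.GeneralLinearGroup

variable {n : Type*} [Fintype n] [DecidableEq n]

/-- The right action on row vectors, `v <• A = v ᵥ* A`. -/
instance instDistribMulActionOpVec {R : Type*} [Semiring R] :
    DistribMulAction (GL n R)ᵐᵒᵖ (n → R) :=
  DistribMulAction.compHom _ (Units.coeHom (Matrix n n R)).op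

theorem exists_vecMul_eq {K ι : Type*} [Field K] {v w : ι → n → K}
    (hv : LinearIndependent K v) (hw : LinearIndependent K w) :
    ∃ A : GL n K, ∀ i, v i ᵥ* (A : Matrix n n K) = w i := by
  obtain ⟨g, hg⟩ := Submodule.exists_linearEquiv_restrict_eq
    (hv.linearCombinationEquiv.symm ≪≫ₗ hw.linearCombinationEquiv)
  have hunit : IsUnit (LinearMap.toMatrix' (g : (n → K) →ₗ[K] n → K))ᵀ := by
    rw [isUnit_transpose, LinearMap.isUnit_toMatrix'_iff, Module.End.isUnit_iff]
    exact g.bijective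
  refine ⟨hunit.unit, fun i => ?_⟩
  rw [IsUnit.unit_spec, vecMul_transpose, LinearMap.toMatrix'_mulVec]
  simpa using (hg (hv.linearCombinationEquiv (Finsupp.single i 1))).symm

theorem sum_vecMul {R M : Type*} [Semiring R] [Fintype R] [AddCommMonoid M] (A : GL n R)
    (f : (n → R) → M) : ∑ v, f (v ᵥ* (A : Matrix n n R)) = ∑ v, f v :=
  Fintype.sum_bijective _ (MulAction.bijective (MulOpposite.op A)) _ _ fun _ => rfl

theorem card_mul_sum_sum_vecMul_erase_zero {K R : Type*} [Field K] [Fintype K] [DecidableEq K]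
    [CommSemiring R] (w f : (n → K) → R) :
    #(univ.erase (0 : n → K)) *
        ∑ A : GL n K, ∑ a ∈ univ.erase 0, w a * f (a ᵥ* (A : Matrix n n K)) =
      Fintype.card (GL n K) * (∑ a ∈ univ.erase 0, w a) * ∑ c ∈ univ.erase 0, f c := by
  refine card_mul_sum_sum_mul_op_smul (fun c hc A => ?_) (fun c hc d hd => ?_) w f
  · exact mem_erase.2 ⟨(smul_eq_zero_iff_eq _).not.2 (ne_of_mem_erase hc), mem_univ _⟩
  · have hli : ∀ x ∈ univ.erase (0 : n → K), LinearIndependent K ![x] := fun x hx =>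
      linearIndependent_unique_iff.2 (ne_of_mem_erase hx)
    obtain ⟨A, hA⟩ := exists_vecMul_eq (hli c hc) (hli d hd)
    exact ⟨A, hA 0⟩

theorem card_mul_sum_sum_vecMul_offDiag {R : Type*} [CommSemiring R]
    (w f : (n → ZMod 2) × (n → ZMod 2) → R) :
    #(univ.erase (0 : n → ZMod 2)).offDiag * ∑ A : GL n (ZMod 2), ∑ p ∈ (univ.erase 0).offDiag,
        w p * f (p.1 ᵥ* (A : Matrix n n (ZMod 2)), p.2 ᵥ* (A : Matrix n n (ZMod 2))) =
      Fintype.card (GL n (ZMod 2)) * (∑ p ∈ (univ.erase 0).offDiag, w p) *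
        ∑ p ∈ (univ.erase 0).offDiag, f p := by
  have hmem : ∀ p : (n → ZMod 2) × (n → ZMod 2),
      p ∈ (univ.erase 0).offDiag ↔ p.1 ≠ 0 ∧ p.2 ≠ 0 ∧ p.1 ≠ p.2 := by
    simp
  refine card_mul_sum_sum_mul_op_smul (fun p hp A => ?_) (fun p hp r hr => ?_) w f
  · obtain ⟨h1, h2, h12⟩ := (hmem p).1 hp
    exact (hmem _).2 ⟨(smul_eq_zero_iff_eq _).not.2 h1, (smul_eq_zero_iff_eq _).not.2 h2,
      (smul_left_cancel_iff _).not.2 h12⟩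
  · obtain ⟨A, hA⟩ := exists_vecMul_eq (linearIndependent_pair_zmod_two_iff.2 ((hmem p).1 hp))
      (linearIndependent_pair_zmod_two_iff.2 ((hmem r).1 hr))
    exact ⟨A, Prod.ext (hA 0) (hA 1)⟩

end Matrix.GeneralLinearGroup

open Matrix.GeneralLinearGroup

theorem sum_sq_sum_mul_vecMul {n : ℕ} (hn : 2 ≤ n) {χ u : (Fin n → ZMod 2) → ℤ}
    (hχ : ∀ a, χ a ^ 2 = 1) (hu : ∀ c, u c ^ 2 = 1) (hbal : ∑ a, χ a = 0) :
    (2 ^ n - 1) * ∑ A : GL (Fin n) (ZMod 2), (∑ a, χ a * u (a ᵥ* (A : Matrix _ _ _))) ^ 2 =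
      Fintype.card (GL (Fin n) (ZMod 2)) * (2 ^ (2 * n) - (∑ c, u c) ^ 2) := by
  have hsingle := card_mul_sum_sum_vecMul_erase_zero χ u
  have hpair := card_mul_sum_sum_vecMul_offDiag (fun p => χ p.1 * χ p.2) (fun p => u p.1 * u p.2)
  set s := (univ : Finset (Fin n → ZMod 2)).erase 0
  set G : ℤ := (Fintype.card (GL (Fin n) (ZMod 2)) : ℤ) with hG
  set m : ℤ := (#s : ℤ)
  set U := ∑ c ∈ s, u c
  set W' : GL (Fin n) (ZMod 2) → ℤ := fun A => ∑ a ∈ s, χ a * u (a ᵥ* (A : Matrix _ _ _))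
  have hm : 2 ^ n = m + 1 := by
    simp [m, s, card_erase_of_mem]
  have hm1 : m - 1 ≠ 0 := by
    have : (2 : ℤ) ^ 2 ≤ 2 ^ n := pow_le_pow_right₀ (by norm_num) hn
    omega
  have hχs : ∑ a ∈ s, χ a = -χ 0 := by
    linarith [add_sum_erase univ χ (mem_univ 0)]
  have hW : ∀ A : GL (Fin n) (ZMod 2),
      ∑ a, χ a * u (a ᵥ* (A : Matrix _ _ _)) = χ 0 * u 0 + W' A := fun A => by
    rw [← add_sum_erase _ _ (mem_univ 0), zero_vecMul]
  have hsum_W' : m * ∑ A, W' A = G * -χ 0 * U := by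
    rw [← hχs]
    exact hsingle
  have hsq_W' : ∀ A : GL (Fin n) (ZMod 2), W' A ^ 2 = m + ∑ p ∈ s.offDiag,
      χ p.1 * χ p.2 * (u (p.1 ᵥ* (A : Matrix _ _ _)) * u (p.2 ᵥ* (A : Matrix _ _ _))) := fun A => by
    rw [sq_sum_eq_sum_sq_add_sum_offDiag]
    simp only [mul_pow, hχ, hu, one_mul, sum_const, nsmul_one]
    exact congrArg _ (sum_congr rfl fun p _ => by ring)
  have hsum_W'_sq :
      (m ^ 2 - m) * ∑ A, W' A ^ 2 = (m ^ 2 - m) * m * G + G * (1 - m) * (U ^ 2 - m) := by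
    have hoff : m ^ 2 - m = #s.offDiag := by
      rw [offDiag_card, Nat.cast_sub (Nat.le_mul_self _), Nat.cast_mul, sq]
    rw [sum_congr rfl fun A _ => hsq_W' A, sum_add_distrib, mul_add, hoff, sum_const, card_univ,
      nsmul_eq_mul, ← hG, hpair, sum_offDiag_mul_of_sq_eq_one fun a _ => hχ a,
      sum_offDiag_mul_of_sq_eq_one fun c _ => hu c, hχs, ← hoff, neg_sq, hχ]
    ring
  rw [pow_mul', hm, add_sub_cancel_right, ← add_sum_erase _ _ (mem_univ (0 : Fin n → ZMod 2))]
  refine mul_left_cancel₀ hm1 ?_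
  simp only [hW, add_sq, sum_add_distrib, ← mul_sum, sum_const, card_univ, nsmul_eq_mul]
  linear_combination 2 * χ 0 * u 0 * (m - 1) * hsum_W' + hsum_W'_sq +
    (m - 1) * G * (m * u 0 ^ 2 - 2 * u 0 * U) * hχ 0 + (m - 1) * G * (m + 1) * hu 0

theorem neg_one_pow_val_add (x y : ZMod 2) :
    (-1 : ℤ) ^ (x + y).val = (-1) ^ x.val * (-1) ^ y.val := by
  revert x y; decide

theorem neg_one_pow_val_sq (x : ZMod 2) : ((-1 : ℤ) ^ x.val) ^ 2 = 1 := by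
  rw [← pow_mul, mul_comm, pow_mul, neg_one_sq, one_pow]

theorem imb_eq {n : ℕ} (f : (Fin n → ZMod 2) → ZMod 2) : imb f = 2 ^ n - 2 * wt f := by
  have hsign : ∀ x : ZMod 2, (-1 : ℤ) ^ x.val = 1 - 2 * if x = 1 then 1 else 0 := by decide
  rw [imb, wt, sum_congr rfl fun a _ => hsign (f a), sum_sub_distrib, ← mul_sum, sum_boole]
  simp

theorem imb_eq_zero_of_wt_eq {n : ℕ} (hn : 1 ≤ n) {f : (Fin n → ZMod 2) → ZMod 2}
    (hf : wt f = 2 ^ (n - 1)) : imb f = 0 := by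
  rw [imb_eq, hf, Nat.cast_pow, Nat.cast_ofNat, ← pow_succ', Nat.sub_add_cancel hn, sub_self]

theorem sum_Wq_sq {n : ℕ} (hn : 2 ≤ n) (q : (Fin n → ZMod 2) → ZMod 2)
    {f : (Fin n → ZMod 2) → ZMod 2} (hf : imb f = 0) :
    (2 ^ n - 1) * ∑ A : GL (Fin n) (ZMod 2), Wq q f A ^ 2 =
      Fintype.card (GL (Fin n) (ZMod 2)) * (2 ^ (2 * n) - imb q ^ 2) := by
  simpa only [Wq, imb, neg_one_pow_val_add] using
    sum_sq_sum_mul_vecMul hn (fun a => neg_one_pow_val_sq (f a))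
      (fun c => neg_one_pow_val_sq (q c)) hf

theorem exists_sq_Wq_ge {n : ℕ} (hn : 2 ≤ n) (q : (Fin n → ZMod 2) → ZMod 2)
    {f : (Fin n → ZMod 2) → ZMod 2} (hf : imb f = 0) :
    ∃ A : GL (Fin n) (ZMod 2), 2 ^ (2 * n) - imb q ^ 2 ≤ (2 ^ n - 1) * Wq q f A ^ 2 := by
  have hsum : ∑ _A : GL (Fin n) (ZMod 2), (2 ^ (2 * n) - imb q ^ 2) =
      ∑ A : GL (Fin n) (ZMod 2), (2 ^ n - 1) * Wq q f A ^ 2 := by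
    rw [sum_const, card_univ, ← mul_sum, sum_Wq_sq hn q hf, nsmul_eq_mul]
  obtain ⟨A, -, hA⟩ := exists_le_of_sum_le univ_nonempty hsum.le
  exact ⟨A, hA⟩

theorem rho_le_abs {n : ℕ} (q : (Fin n → ZMod 2) → ZMod 2) {w : ℤ}
    (h : 2 ^ (2 * n) - imb q ^ 2 ≤ (2 ^ n - 1) * w ^ 2) : rho q ≤ |w| := by
  have hR : (2 : ℝ) ^ (2 * n) - (imb q : ℝ) ^ 2 ≤ (w : ℝ) ^ 2 * ((2 : ℝ) ^ n - 1) := by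
    have := (Int.cast_le (R := ℝ)).2 h
    push_cast at this
    linarith
  rw [rho, Int.ceil_le, Real.sqrt_le_iff, Int.cast_abs, sq_abs]
  exact ⟨abs_nonneg _, div_le_of_le_mul₀ (sub_nonneg.2 (one_le_pow₀ one_le_two)) (sq_nonneg _) hR⟩

theorem Wq_modEq_two_mul_wt {n : ℕ} (q : (Fin n → ZMod 2) → ZMod 2)
    {f : (Fin n → ZMod 2) → ZMod 2} (hf : imb f = 0) (A : GL (Fin n) (ZMod 2)) :
    Wq q f A ≡ 2 * wt q [ZMOD 4] := by
  have hterm : ∀ x y : ZMod 2, (4 : ℤ) ∣ (1 - (-1) ^ x.val) * (1 - (-1) ^ y.val) := by decide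
  have hdvd := dvd_sum fun a (_ : a ∈ univ) => hterm (f a) (q (a ᵥ* (A : Matrix _ _ _)))
  have hexpand : ∑ a, (1 - (-1 : ℤ) ^ (f a).val) * (1 - (-1) ^ (q (a ᵥ* (A : Matrix _ _ _))).val) =
      2 ^ n - imb f - imb q + Wq q f A := by
    simp only [Wq, imb, neg_one_pow_val_add, sub_mul, one_mul, mul_sub, mul_one, sum_sub_distrib,
      sum_vecMul A fun c => (-1 : ℤ) ^ (q c).val, sum_const, card_univ, Fintype.card_pi, ZMod.card,
      prod_const, Fintype.card_fin, nsmul_eq_mul, Nat.cast_pow, Nat.cast_ofNat]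
    abel
  have hdiff : 2 * (wt q : ℤ) - Wq q f A = 4 * wt q - (2 ^ n - imb f - imb q + Wq q f A) := by
    rw [hf, imb_eq q]; ring
  rw [Int.modEq_iff_dvd, hdiff, ← hexpand]
  exact dvd_sub (dvd_mul_right _ _) hdvd

theorem abs_modEq_four_of_modEq {w k : ℤ} (h : w ≡ 2 * k [ZMOD 4]) : |w| ≡ 2 * k [ZMOD 4] := by
  rcases abs_choice w with hw | hw <;> rw [hw]
  · exact h
  · exact h.neg.trans (Int.modEq_iff_dvd.2 ⟨k, by ring⟩)

theorem rho_mod_four_general (n : ℕ) (hn : 2 < n)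
    (q : (Fin n → ZMod 2) → ZMod 2)
    (h : ∃ f : (Fin n → ZMod 2) → ZMod 2,
        wt f = 2 ^ (n - 1) ∧ ∀ A : GL (Fin n) (ZMod 2), |Wq q f A.val| ≤ rho q) :
    (Even (wt q) → rho q ≡ 0 [ZMOD 4]) ∧ (Odd (wt q) → rho q ≡ 2 [ZMOD 4]) := by
  obtain ⟨f, hf, hbound⟩ := h
  have hbal : imb f = 0 := imb_eq_zero_of_wt_eq (by omega) hf
  obtain ⟨A, hA⟩ := exists_sq_Wq_ge (by omega) q hbal
  have hrho : rho q = |Wq q f A| := le_antisymm (rho_le_abs q hA) (hbound A)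
  have hmod : rho q ≡ 2 * wt q [ZMOD 4] :=
    hrho ▸ abs_modEq_four_of_modEq (Wq_modEq_two_mul_wt q hbal A)
  refine ⟨fun ⟨k, hk⟩ => hmod.trans ?_, fun ⟨k, hk⟩ => hmod.trans ?_⟩ <;>
    exact Int.modEq_iff_dvd.2 ⟨-k, by rw [hk]; push_cast; ring⟩

/-- Necessary condition: if a balanced `q`-nearly bent function exists, then
`ρ_q ≡ 0 (mod 4)` when `wt q` is even and `ρ_q ≡ 2 (mod 4)` when `wt q` is odd. -/
theorem rho_mod_four (n : ℕ) (hn : 2 < n)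
    (q : (Fin n → ZMod 2) → ZMod 2) (hw : wt q ≤ 2 ^ (n - 1))
    (h : ∃ f : (Fin n → ZMod 2) → ZMod 2,
        wt f = 2 ^ (n - 1) ∧ ∀ A : GL (Fin n) (ZMod 2), |Wq q f A.val| ≤ rho q) :
    (Even (wt q) → rho q ≡ 0 [ZMOD 4]) ∧ (Odd (wt q) → rho q ≡ 2 [ZMOD 4]) :=
  rho_mod_four_general n hn q h
end

section
/- Let n be even and let q ∈ B_n be a non-zero linear function, q(x) = w·x with w ≠ 0. Then f ∈ B_n is q-bent if and only if f is bent. -/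
open Finset Matrix

/-!
For linear `q = w ⬝ᵥ ·` we have `q(aA) = (A w) ⬝ᵥ a`, so `W_q(f)(A)` is the Walsh coefficient
of `f` at `A w`. As `A` runs over `GL_n`, `A w` runs over all nonzero vectors, and the Walsh
coefficient at `0` is the imbalance; so the `q`-bent conditions are exactly the bent conditions.
-/

theorem exists_linearEquiv_apply_eq {K V : Type*} [Field K] [AddCommGroup V] [Module K V]
    {x y : V} (hx : x ≠ 0) (hy : y ≠ 0) : ∃ g : V ≃ₗ[K] V, g x = y := by
  obtain ⟨g, hg⟩ := Submodule.exists_linearEquiv_restrict_eq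
    (LinearEquiv.coord K V x hx ≪≫ₗ LinearEquiv.toSpanNonzeroSingleton K V y hy)
  refine ⟨g, ?_⟩
  simpa [LinearEquiv.coord_self] using (hg ⟨x, Submodule.mem_span_singleton_self x⟩).symm

theorem Matrix.GeneralLinearGroup.exists_mulVec_eq {K ι : Type*} [Field K] [Fintype ι]
    [DecidableEq ι] {w v : ι → K} (hw : w ≠ 0) (hv : v ≠ 0) : ∃ A : GL ι K, A.val *ᵥ w = v := by
  obtain ⟨L, hL⟩ := exists_linearEquiv_apply_eq (K := K) hw hv
  refine ⟨toLin.symm (.ofLinearEquiv L), ?_⟩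
  rw [← mulVecLin_apply, ← coe_toLin, MulEquiv.apply_symm_apply]
  exact hL

theorem Matrix.dotProduct_vecMul_comm {R ι : Type*} [CommSemiring R] [Fintype ι]
    (w a : ι → R) (A : Matrix ι ι R) : w ⬝ᵥ (a ᵥ* A) = (A *ᵥ w) ⬝ᵥ a := by
  rw [dotProduct_comm, ← dotProduct_mulVec, dotProduct_comm]

def walsh {n : ℕ} (f : (Fin n → ZMod 2) → ZMod 2) (v : Fin n → ZMod 2) : ℤ :=
  ∑ a : Fin n → ZMod 2, (-1 : ℤ) ^ (f a + v ⬝ᵥ a).val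

theorem walsh_zero {n : ℕ} (f : (Fin n → ZMod 2) → ZMod 2) : walsh f 0 = imb f := by
  simp [walsh, imb]

theorem Wq_dotProduct {n : ℕ} (w : Fin n → ZMod 2) (f : (Fin n → ZMod 2) → ZMod 2)
    (A : Matrix (Fin n) (Fin n) (ZMod 2)) : Wq (w ⬝ᵥ ·) f A = walsh f (A *ᵥ w) := by
  simp only [Wq, walsh, dotProduct_vecMul_comm]

theorem forall_GL_Wq_dotProduct_iff {n : ℕ} {w : Fin n → ZMod 2} (hw : w ≠ 0)
    (f : (Fin n → ZMod 2) → ZMod 2) (P : ℤ → Prop) :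
    (∀ A : GL (Fin n) (ZMod 2), P (Wq (w ⬝ᵥ ·) f A.val)) ↔ ∀ v ≠ 0, P (walsh f v) := by
  simp only [Wq_dotProduct]
  refine ⟨fun h v hv => ?_, fun h A => h _ ?_⟩
  · obtain ⟨A, rfl⟩ := GeneralLinearGroup.exists_mulVec_eq hw hv
    exact h A
  · intro hAw
    exact hw (by simpa using congrArg (A⁻¹).val.mulVec hAw)

theorem forall_walsh_iff_forall_ne_zero_and_imb {n : ℕ} (f : (Fin n → ZMod 2) → ZMod 2)
    (P : ℤ → Prop) :
    (∀ v, P (walsh f v)) ↔ (∀ v ≠ 0, P (walsh f v)) ∧ P (imb f) := by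
  refine ⟨fun h => ⟨fun v _ => h v, walsh_zero f ▸ h 0⟩, fun ⟨h, h0⟩ v => ?_⟩
  rcases eq_or_ne v 0 with rfl | hv
  · exact walsh_zero f ▸ h0
  · exact h v hv

theorem qbent_iff_bent_general (n : ℕ)
    (w : Fin n → ZMod 2) (hw : w ≠ 0) (f : (Fin n → ZMod 2) → ZMod 2) :
    ((∀ A : GL (Fin n) (ZMod 2),
        |Wq (fun x => ∑ i, w i * x i) f A.val| = 2 ^ (n / 2)) ∧
      |imb f| = 2 ^ (n / 2)) ↔
    (∀ v : Fin n → ZMod 2,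
        |∑ a : Fin n → ZMod 2, (-1 : ℤ) ^ (f a + ∑ i, v i * a i).val| = 2 ^ (n / 2)) :=
  (and_congr_left' (forall_GL_Wq_dotProduct_iff hw f (|·| = 2 ^ (n / 2)))).trans
    (forall_walsh_iff_forall_ne_zero_and_imb f (|·| = 2 ^ (n / 2))).symm

/-- For nonzero linear `q(x) = w·x` (and `n` even), `f` is `q`-bent iff `f` is bent. -/
theorem qbent_iff_bent (n : ℕ) (hne : Even n)
    (w : Fin n → ZMod 2) (hw : w ≠ 0) (f : (Fin n → ZMod 2) → ZMod 2) :
    ((∀ A : GL (Fin n) (ZMod 2),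
        |Wq (fun x => ∑ i, w i * x i) f A.val| = 2 ^ (n / 2)) ∧
      |imb f| = 2 ^ (n / 2)) ↔
    (∀ v : Fin n → ZMod 2,
        |∑ a : Fin n → ZMod 2, (-1 : ℤ) ^ (f a + ∑ i, v i * a i).val| = 2 ^ (n / 2)) :=
  qbent_iff_bent_general n w hw f
end

section
/- Let n be even and let q ∈ B_n be a bent function. Then every non-zero linear function f(x) = v·x (v ∈ V_n, v ≠ 0) is q-nearly bent; indeed ρ_q = 2^(n/2) and |W_q(f)(A)| = 2^(n/2) for all A ∈ GL_n. -/
open Finset Matrix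

/-- For bent `q` (and `n` even), every nonzero linear function `f(x) = v·x` is
`q`-nearly bent: `ρ_q = 2^{n/2}` and `|W_q(f)(A)| = 2^{n/2}` for all `A ∈ GL_n`. -/
theorem linear_nearly_bent (n : ℕ) (hne : Even n)
    (q : (Fin n → ZMod 2) → ZMod 2)
    (hq : ∀ v : Fin n → ZMod 2,
        |∑ a : Fin n → ZMod 2, (-1 : ℤ) ^ (q a + ∑ i, v i * a i).val| = 2 ^ (n / 2))
    (v : Fin n → ZMod 2) (hv : v ≠ 0) :
    rho q = 2 ^ (n / 2) ∧
      ∀ A : GL (Fin n) (ZMod 2),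
        |Wq q (fun x => ∑ i, v i * x i) A.val| = 2 ^ (n / 2) := by

  have hn : 0 < n := by
    rcases Nat.eq_zero_or_pos n with h0 | hn
    · subst h0
      exact absurd (funext fun i => i.elim0) hv
    · exact hn
  have hn2 : n / 2 * 2 = n := Nat.div_mul_cancel hne.two_dvd
  have himb : |imb q| = 2 ^ (n / 2) := by
    have h := hq 0
    simp only [Pi.zero_apply, zero_mul, Finset.sum_const_zero, add_zero] at h
    simpa [imb] using h
  constructor
  · -- rho computation
    have hsq : ((imb q : ℝ)) ^ 2 = 2 ^ n := by
      have hz : (imb q) ^ 2 = ((2 : ℤ) ^ (n / 2)) ^ 2 := by rw [← sq_abs, himb]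
      have : ((imb q : ℝ)) ^ 2 = ((2 : ℝ) ^ (n / 2)) ^ 2 := by exact_mod_cast hz
      rw [this, ← pow_mul, hn2]
    have hden : (2 : ℝ) ^ n - 1 ≠ 0 := by
      have : (1 : ℝ) < 2 ^ n := by
        apply one_lt_pow₀ (by norm_num) (by omega)
      linarith
    have harg : ((2 : ℝ) ^ (2 * n) - (imb q : ℝ) ^ 2) / ((2 : ℝ) ^ n - 1) = 2 ^ n := by
      rw [hsq, div_eq_iff hden, two_mul, pow_add]
      ring
    have hsqrt : Real.sqrt ((2 : ℝ) ^ n) = 2 ^ (n / 2) := by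
      rw [show ((2 : ℝ) ^ n) = ((2 : ℝ) ^ (n / 2)) ^ 2 by rw [← pow_mul, hn2]]
      exact Real.sqrt_sq (by positivity)
    rw [rho, harg, hsqrt]
    rw [show ((2 : ℝ) ^ (n / 2)) = (((2 : ℤ) ^ (n / 2) : ℤ) : ℝ) by push_cast; ring]
    exact Int.ceil_intCast _
  · intro A
    set B := ((A⁻¹ : GL (Fin n) (ZMod 2)) : Matrix (Fin n) (Fin n) (ZMod 2)) with hB
    have hAB : (A : Matrix (Fin n) (Fin n) (ZMod 2)) * B = 1 := by
      rw [hB, ← Units.val_mul, mul_inv_cancel, Units.val_one]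
    have hBA : B * (A : Matrix (Fin n) (Fin n) (ZMod 2)) = 1 := by
      rw [hB, ← Units.val_mul, inv_mul_cancel, Units.val_one]
    have key := hq (B.mulVec v)
    have reindex : Wq q (fun x => ∑ i, v i * x i) A.val
        = ∑ a : Fin n → ZMod 2, (-1 : ℤ) ^ (q a + ∑ i, (B.mulVec v) i * a i).val := by
      rw [Wq]
      apply Fintype.sum_bijective (fun a => Matrix.vecMul a (A : Matrix (Fin n) (Fin n) (ZMod 2)))
      · apply Function.bijective_iff_has_inverse.2
        refine ⟨fun b => Matrix.vecMul b B, fun a => ?_, fun b => ?_⟩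
        · show Matrix.vecMul (Matrix.vecMul a _) B = a
          rw [Matrix.vecMul_vecMul, hAB, Matrix.vecMul_one]
        · show Matrix.vecMul (Matrix.vecMul b B) _ = b
          rw [Matrix.vecMul_vecMul, hBA, Matrix.vecMul_one]
      · intro a
        congr 1
        have hdot : ∑ i, (B.mulVec v) i * (Matrix.vecMul a (A : Matrix (Fin n) (Fin n) (ZMod 2))) i
            = ∑ i, v i * a i := by
          have h1 : (Matrix.vecMul a (A : Matrix (Fin n) (Fin n) (ZMod 2))) ⬝ᵥ (B.mulVec v)
              = a ⬝ᵥ v := by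
            rw [← Matrix.dotProduct_mulVec, Matrix.mulVec_mulVec, hAB, Matrix.one_mulVec]
          have h2 : (B.mulVec v) ⬝ᵥ (Matrix.vecMul a (A : Matrix (Fin n) (Fin n) (ZMod 2)))
              = a ⬝ᵥ v := by rw [dotProduct_comm]; exact h1
          calc ∑ i, (B.mulVec v) i * (Matrix.vecMul a (A : Matrix (Fin n) (Fin n) (ZMod 2))) i
              = (B.mulVec v) ⬝ᵥ (Matrix.vecMul a (A : Matrix (Fin n) (Fin n) (ZMod 2))) := rfl
            _ = a ⬝ᵥ v := h2
            _ = ∑ i, v i * a i := by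
                rw [dotProduct_comm]; rfl
        rw [hdot, add_comm]
    rw [reindex]
    exact key
end

section
/- Let q ∈ B_3 be defined by q(x_1, x_2, x_3) = x_1·x_2 + x_3. Then every f ∈ B_3 with wt(f) = 2 is q-plateaued with λ = 4; that is, W_q(f)(A) ∈ {0, 4, −4} for all A ∈ GL_3. -/
open Finset Matrix

/-- The quadratic `q(x) = x₁x₂ + x₃` on `V₃`. -/
def q3 : (Fin 3 → ZMod 2) → ZMod 2 := fun x => x 0 * x 1 + x 2

lemma pow_val_add : ∀ x y : ZMod 2,
    (-1 : ℤ) ^ ((x + y).val) = (-1 : ℤ) ^ x.val * (-1 : ℤ) ^ y.val := by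
  decide

lemma q3_balanced : ∑ b : Fin 3 → ZMod 2, (-1 : ℤ) ^ ((q3 b).val) = 0 := by
  decide

lemma pow_val_mem : ∀ x : ZMod 2, (-1 : ℤ) ^ x.val = 1 ∨ (-1 : ℤ) ^ x.val = -1 := by
  decide

lemma zmod2_ne_one : ∀ x : ZMod 2, x ≠ 1 → x = 0 := by decide

/-- Every `f ∈ B₃` of weight 2 is `q₃`-plateaued with `λ = 4`. -/
theorem weight_two_plateaued (f : (Fin 3 → ZMod 2) → ZMod 2) (hf : wt f = 2) :
    ∀ A : GL (Fin 3) (ZMod 2), Wq q3 f A.val ∈ ({0, 4, -4} : Set ℤ) := by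
  intro A
  set B := A.val with hB
  set g : (Fin 3 → ZMod 2) → ℤ := fun a => (-1 : ℤ) ^ ((q3 (Matrix.vecMul a B)).val)
    with hg
  have hinv1 : B * (↑A⁻¹ : Matrix (Fin 3) (Fin 3) (ZMod 2)) = 1 := by
    rw [hB, ← Units.val_mul, mul_inv_cancel, Units.val_one]
  have hinv2 : (↑A⁻¹ : Matrix (Fin 3) (Fin 3) (ZMod 2)) * B = 1 := by
    rw [hB, ← Units.val_mul, inv_mul_cancel, Units.val_one]
  have hbij : Function.Bijective (fun a : Fin 3 → ZMod 2 => Matrix.vecMul a B) := by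
    refine Function.bijective_iff_has_inverse.2
      ⟨fun a => Matrix.vecMul a (↑A⁻¹), fun a => ?_, fun a => ?_⟩ <;>
      simp only [Matrix.vecMul_vecMul, hinv1, hinv2, Matrix.vecMul_one]
  have hsumg : ∑ a : Fin 3 → ZMod 2, g a = 0 := by
    rw [← q3_balanced]
    exact Fintype.sum_bijective _ hbij _ _ (fun a => rfl)
  have hWq : Wq q3 f B = ∑ a : Fin 3 → ZMod 2, (-1 : ℤ) ^ (f a).val * g a := by
    unfold Wq
    exact Finset.sum_congr rfl (fun a _ => pow_val_add _ _)
  set s : Finset (Fin 3 → ZMod 2) := Finset.univ.filter (fun a => f a = 1) with hs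
  have hsplit : Wq q3 f B = -2 * ∑ a ∈ s, g a := by
    rw [hWq, ← Finset.sum_filter_add_sum_filter_not Finset.univ (fun a => f a = 1)]
    have h1 : ∑ a ∈ Finset.univ.filter (fun a => f a = 1),
        (-1 : ℤ) ^ (f a).val * g a = -∑ a ∈ s, g a := by
      rw [← Finset.sum_neg_distrib]
      refine Finset.sum_congr rfl (fun a ha => ?_)
      rw [(Finset.mem_filter.1 ha).2, ZMod.val_one]
      ring
    have h2 : ∑ a ∈ Finset.univ.filter (fun a => ¬ f a = 1),
        (-1 : ℤ) ^ (f a).val * g a = ∑ a ∈ sᶜ, g a := by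
      refine Finset.sum_congr ?_ (fun a ha => ?_)
      · rw [hs, Finset.compl_filter]
      · have ha' : f a ≠ 1 := by
          have := Finset.mem_compl.1 ha
          simp [hs, Finset.mem_filter] at this
          exact this
        rw [zmod2_ne_one _ ha']
        norm_num
    have h3 : ∑ a ∈ sᶜ, g a = - ∑ a ∈ s, g a := by
      have := Finset.sum_compl_add_sum s g
      linarith [hsumg]
    rw [h1, h2, h3]; ring
  have hcard : s.card = 2 := hf
  obtain ⟨u, v, huv, hsuv⟩ := Finset.card_eq_two.1 hcard
  rw [hsplit, hsuv, Finset.sum_pair huv]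
  rcases pow_val_mem (q3 (Matrix.vecMul u B)) with h | h <;>
    rcases pow_val_mem (q3 (Matrix.vecMul v B)) with h' | h' <;>
    simp only [hg] <;> rw [h, h'] <;> norm_num
end
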